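/- arXiv:0906.1083 — 5 statements merged into one kernel-verified Lean document; each statement's English description precedes it below -/
import Mathlib

section
/- Let $R$ be a commutative ring of prime characteristic $p$ and let $I \subseteq R$ be an ideal. For all integers $a, b \geq 0$, the product of ideals $(I^{[p^a]} : I) \cdot \big((I^{[p^b]} : I)\big)^{[p^a]}$ is contained in $(I^{[p^{a+b}]} : I)$. -/
/-!
Since the Frobenius iterate `r ↦ r^(p^a)` is a ring map, it sends `(I^[p^b] : I)` into
`(I^[p^(a+b)] : I^[p^a])`; and colon ideals compose, `(J : I) * (K : J) ⊆ (K : I)`, here with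
`J = I^[p^a]` and `K = I^[p^(a+b)]`.
-/

open Ideal

namespace Ideal

variable {R S : Type*} [CommSemiring R] [CommSemiring S]

theorem le_colon_iff_mul_le {A I J : Ideal R} : A ≤ J.colon I ↔ A * I ≤ J :=
  ⟨fun h => mul_le.mpr fun _ hr _ hs => Submodule.mem_colon.mp (h hr) _ hs,
    fun h _ hr => Submodule.mem_colon.mpr fun _ hs => mul_le.mp h _ hr _ hs⟩

theorem colon_mul_le (I J : Ideal R) : J.colon I * I ≤ J :=
  le_colon_iff_mul_le.mp le_rfl

theorem colon_mul_colon_le (I J K : Ideal R) : J.colon I * K.colon J ≤ K.colon I :=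
  le_colon_iff_mul_le.mpr <|
    calc J.colon I * K.colon J * I = K.colon J * (J.colon I * I) := by ring
      _ ≤ K.colon J * J := mul_mono_right (colon_mul_le I J)
      _ ≤ K := colon_mul_le J K

theorem map_colon_le (f : R →+* S) (I J : Ideal R) :
    (J.colon I).map f ≤ (J.map f).colon (I.map f) :=
  le_colon_iff_mul_le.mpr <| (Ideal.map_mul f _ _).symm.trans_le (map_mono (colon_mul_le I J))

end Ideal

/-- For an ideal `I` in a commutative ring `R` of prime characteristic `p`,
`(I^[p^a] : I) * ((I^[p^b] : I))^[p^a] ⊆ (I^[p^(a+b)] : I)`, where `J^[p^c]` denotes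
the `c`-th Frobenius power of `J`, i.e. the extension of `J` along `r ↦ r^(p^c)`. -/
theorem frobenius_colon_mul
    (R : Type*) [CommRing R] (p : ℕ) [Fact p.Prime] [CharP R p]
    (I : Ideal R) (a b : ℕ) :
    ((I.map (iterateFrobenius R p a)).colon I) *
        (((I.map (iterateFrobenius R p b)).colon I).map (iterateFrobenius R p a)) ≤
      (I.map (iterateFrobenius R p (a + b))).colon I := by
  rw [iterateFrobenius_add, ← map_map]
  calc _ ≤ (I.map (iterateFrobenius R p a)).colon I *
        ((I.map (iterateFrobenius R p b)).map (iterateFrobenius R p a)).colon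
          (I.map (iterateFrobenius R p a)) :=
        mul_mono_right (map_colon_le _ _ _)
    _ ≤ _ := colon_mul_colon_le _ _ _
end

section
/- Let $\mathbb{K}$ be a field and let $R = \mathbb{K}[\![x, y, z]\!]$ be the formal power series ring in three variables. For every integer $q > 1$, the colon ideal $\big((x^q y^q, y^q z^q) : (x y, y z)\big)$ equals the ideal $(x^{q} y^{q-1}, \; x^{q-1} y^{q-1} z^{q-1}, \; y^{q-1} z^{q})$. -/
/-!
All ideals involved are generated by monomials. In `K⟦σ⟧` a power series lies in the ideal
generated by finitely many monomials `X^e` iff every exponent of its support dominates some `e`,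
so `f` lies in the colon of two monomial ideals iff each exponent `d` of `f` satisfies: for every
generator `X^e` of the second ideal, `d + e` dominates a generator of the first. The theorem thus
reduces to a statement about exponent vectors in `ℕ³`, which is linear arithmetic.
-/

open MvPowerSeries Finsupp

namespace MvPowerSeries

variable {σ : Type*} (R : Type*) [CommSemiring R]

noncomputable def monomialIdeal (s : Finset (σ →₀ ℕ)) : Ideal (MvPowerSeries σ R) :=
  Ideal.span ((monomial · 1) '' (s : Set (σ →₀ ℕ)))

variable {R}

theorem mem_monomialIdeal_iff (s : Finset (σ →₀ ℕ)) (f : MvPowerSeries σ R) :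
    f ∈ monomialIdeal R s ↔ ∀ d, coeff d f ≠ 0 → ∃ e ∈ s, e ≤ d := by
  classical
  induction s using Finset.induction_on generalizing f with
  | empty => simp [monomialIdeal, MvPowerSeries.ext_iff]
  | insert e s _ ih =>
    rw [monomialIdeal, Finset.coe_insert, Set.image_insert_eq, Ideal.span_insert,
      Submodule.mem_sup]
    constructor
    · rintro ⟨_, hg, h, hh, rfl⟩ d hd
      obtain ⟨g, rfl⟩ := Ideal.mem_span_singleton'.1 hg
      rw [map_add] at hd
      by_cases hed : e ≤ d
      · exact ⟨e, Finset.mem_insert_self _ _, hed⟩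
      · rw [coeff_mul_monomial, if_neg hed, zero_add] at hd
        obtain ⟨e', he', hle⟩ := (ih h).1 hh d hd
        exact ⟨e', Finset.mem_insert_of_mem he', hle⟩
    · intro hf
      -- `f = monomial e 1 * g + r`, where `r` collects the terms of `f` not divisible by `X ^ e`
      let g : MvPowerSeries σ R := fun d => coeff (d + e) f
      let r : MvPowerSeries σ R := fun d => if e ≤ d then 0 else coeff d f
      have hg (d) : coeff d g = coeff (d + e) f := rfl
      have hr (d) : coeff d r = if e ≤ d then 0 else coeff d f := rfl
      refine ⟨monomial e 1 * g, Ideal.mem_span_singleton'.2 ⟨g, mul_comm _ _⟩, r, ?_, ?_⟩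
      · refine (ih r).2 fun d hd => ?_
        rw [hr] at hd
        split_ifs at hd with hed
        · exact absurd rfl hd
        obtain ⟨e', he', hle⟩ := hf d hd
        rcases Finset.mem_insert.1 he' with rfl | he'
        · exact absurd hle hed
        · exact ⟨e', he', hle⟩
      · ext d
        rw [map_add, coeff_monomial_mul, hr]
        split_ifs with hed
        · rw [one_mul, hg, tsub_add_cancel_of_le hed, add_zero]
        · rw [zero_add]

theorem mul_monomial_mem_monomialIdeal_iff (s : Finset (σ →₀ ℕ)) (e : σ →₀ ℕ)
    (f : MvPowerSeries σ R) :
    f * monomial e 1 ∈ monomialIdeal R s ↔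
      ∀ d, coeff d f ≠ 0 → ∃ e' ∈ s, e' ≤ d + e := by
  rw [mem_monomialIdeal_iff]
  constructor
  · intro h d hd
    refine h (d + e) ?_
    rwa [coeff_mul_monomial, if_pos le_add_self, add_tsub_cancel_right, mul_one]
  · intro h d hd
    rw [coeff_mul_monomial] at hd
    split_ifs at hd with he
    · rw [mul_one] at hd
      simpa only [tsub_add_cancel_of_le he] using h (d - e) hd
    · exact absurd rfl hd

theorem mem_colon_monomialIdeal_iff (s t : Finset (σ →₀ ℕ)) (f : MvPowerSeries σ R) :
    f ∈ (monomialIdeal R s).colon (monomialIdeal R t) ↔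
      ∀ d, coeff d f ≠ 0 → ∀ e ∈ t, ∃ e' ∈ s, e' ≤ d + e := by
  rw [monomialIdeal.eq_1 R t, Ideal.colon_span]
  simp only [Submodule.mem_colon, Set.forall_mem_image, Finset.mem_coe,
    smul_eq_mul, mul_monomial_mem_monomialIdeal_iff]
  exact ⟨fun h d hd e he => h he d hd, fun h e he d hd => h d hd e he⟩

theorem colon_monomialIdeal_eq {s t u : Finset (σ →₀ ℕ)}
    (h : ∀ d, (∀ e ∈ t, ∃ e' ∈ s, e' ≤ d + e) ↔ ∃ e ∈ u, e ≤ d) :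
    (monomialIdeal R s).colon (monomialIdeal R t) = monomialIdeal R u := by
  ext f
  rw [mem_colon_monomialIdeal_iff, mem_monomialIdeal_iff]
  exact forall_congr' fun d => imp_congr_right fun _ => h d

end MvPowerSeries

theorem colon_ideal_computation_general
    (K : Type*) [Field K] (q : ℕ)
    (x y z : MvPowerSeries (Fin 3) K)
    (hx : x = X 0) (hy : y = X 1) (hz : z = X 2) :
    (Ideal.span {x ^ q * y ^ q, y ^ q * z ^ q}).colon (Ideal.span {x * y, y * z}) =
      Ideal.span {x ^ q * y ^ (q - 1), x ^ (q - 1) * y ^ (q - 1) * z ^ (q - 1),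
        y ^ (q - 1) * z ^ q} := by
  subst hx hy hz
  have key := colon_monomialIdeal_eq (σ := Fin 3) (R := K)
    (s := {single 0 q + single 1 q, single 1 q + single 2 q})
    (t := {single 0 1 + single 1 1, single 1 1 + single 2 1})
    (u := {single 0 q + single 1 (q - 1), single 0 (q - 1) + single 1 (q - 1) + single 2 (q - 1),
      single 1 (q - 1) + single 2 q})
    fun d => by
      simp [le_def, Fin.forall_fin_succ]
      omega
  simp only [monomialIdeal, Finset.coe_insert, Finset.coe_singleton, Set.image_insert_eq,
    Set.image_singleton] at key
  simp only [X_pow_eq]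
  simpa only [X, monomial_mul_monomial, mul_one] using key

/-- In `R = K⟦x,y,z⟧`, for `q > 1`,
`((x^q y^q, y^q z^q) : (xy, yz)) = (x^q y^(q-1), x^(q-1) y^(q-1) z^(q-1), y^(q-1) z^q)`. -/
theorem colon_ideal_computation
    (K : Type*) [Field K] (q : ℕ) (hq : 1 < q)
    (x y z : MvPowerSeries (Fin 3) K)
    (hx : x = X 0) (hy : y = X 1) (hz : z = X 2) :
    (Ideal.span {x ^ q * y ^ q, y ^ q * z ^ q}).colon (Ideal.span {x * y, y * z}) =
      Ideal.span {x ^ q * y ^ (q - 1), x ^ (q - 1) * y ^ (q - 1) * z ^ (q - 1),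
        y ^ (q - 1) * z ^ q} :=
  colon_ideal_computation_general K q x y z hx hy hz
end

section
/- Let $\mathbb{K}$ be a field of prime characteristic $p$, let $R = \mathbb{K}[\![x, y, z]\!]$ be the formal power series ring in three variables, and let $I = (xy, yz)$. Then for every integer $e \geq 1$, the colon ideal $K_e = (I^{[p^e]} : I)$ is generated by the three monomials $x^{p^e} y^{p^e - 1}$, $x^{p^e - 1} y^{p^e - 1} z^{p^e - 1}$, and $y^{p^e - 1} z^{p^e}$. -/
/-!
Both `I` and its Frobenius power `I^[q]`, `q = p^e`, are monomial ideals, and membership of a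
power series in a monomial ideal is decided monomial by monomial. Hence `f ∈ (I^[q] : I)` iff
every exponent `d` in the support of `f` satisfies: `d + (1,1,0)` and `d + (0,1,1)` each lie above
`(q,q,0)` or `(0,q,q)`. Solving these coordinatewise inequalities leaves exactly the three
alternatives `d ≥ (q, q-1, 0)`, `d ≥ (q-1, q-1, q-1)`, `d ≥ (0, q-1, q)`.
-/

open MvPowerSeries

/-- A power series ring over a field of characteristic `p` has characteristic `p`. -/
instance mvPowerSeries_charP (K : Type*) [Field K] (p : ℕ) [CharP K p] (σ : Type*) :
    CharP (MvPowerSeries σ K) p :=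
  charP_of_injective_algebraMap' K p

open Finsupp

namespace MvPowerSeries

section Semiring

variable {σ R : Type*} [Semiring R] {f : MvPowerSeries σ R}

theorem mem_span_singleton_monomial_one {a : σ →₀ ℕ} :
    f ∈ Ideal.span {monomial a (1 : R)} ↔ ∀ d, coeff d f ≠ 0 → a ≤ d := by
  rw [Ideal.mem_span_singleton']
  constructor
  · rintro ⟨g, rfl⟩ d hd
    by_contra had
    simp [coeff_mul_monomial, had] at hd
  · intro h
    let g : MvPowerSeries σ R := fun d => coeff (d + a) f
    have hg (d) : coeff d g = coeff (d + a) f := rfl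
    refine ⟨g, ext fun d => ?_⟩
    rw [coeff_mul_monomial]
    split_ifs with had
    · rw [mul_one, hg, tsub_add_cancel_of_le had]
    · exact (not_imp_comm.mp (h d) had).symm

theorem mem_span_monomial_one_image {S : Set (σ →₀ ℕ)} (hS : S.Finite) :
    f ∈ Ideal.span ((monomial · (1 : R)) '' S) ↔ ∀ d, coeff d f ≠ 0 → ∃ a ∈ S, a ≤ d := by
  induction S, hS using Set.Finite.induction_on generalizing f with
  | empty => simp [MvPowerSeries.ext_iff]
  | @insert a S _ _ ih =>
    classical
    rw [Set.image_insert_eq, Ideal.span_insert, Submodule.mem_sup]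
    constructor
    · rintro ⟨g, hg, h, hh, rfl⟩ d hd
      by_cases hgd : coeff d g = 0
      · obtain ⟨b, hb, hbd⟩ := ih.mp hh d (by simpa [hgd] using hd)
        exact ⟨b, Set.mem_insert_of_mem a hb, hbd⟩
      · exact ⟨a, Set.mem_insert a S, mem_span_singleton_monomial_one.mp hg d hgd⟩
    · intro hf
      -- split `f` into its part supported above `a` and the rest
      let g : MvPowerSeries σ R := fun d => if a ≤ d then coeff d f else 0
      let h : MvPowerSeries σ R := fun d => if a ≤ d then 0 else coeff d f
      have hg (d) : coeff d g = if a ≤ d then coeff d f else 0 := rfl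
      have hh (d) : coeff d h = if a ≤ d then 0 else coeff d f := rfl
      refine ⟨g, mem_span_singleton_monomial_one.mpr fun d hd => ?_,
        h, ih.mpr fun d hd => ?_, ext fun d => ?_⟩
      · by_contra had
        exact hd (by rw [hg, if_neg had])
      · have had : ¬ a ≤ d := fun had => hd (by rw [hh, if_pos had])
        obtain ⟨b, hb, hbd⟩ := hf d (by rwa [hh, if_neg had] at hd)
        exact ⟨b, hb.resolve_left (by rintro rfl; exact had hbd), hbd⟩
      · rw [map_add, hg, hh]
        split_ifs <;> simp

theorem mul_monomial_one_mem_span_monomial_one_image {S : Set (σ →₀ ℕ)} (hS : S.Finite)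
    {c : σ →₀ ℕ} :
    f * monomial c 1 ∈ Ideal.span ((monomial · (1 : R)) '' S) ↔
      ∀ d, coeff d f ≠ 0 → ∃ a ∈ S, a ≤ d + c := by
  rw [mem_span_monomial_one_image hS]
  refine ⟨fun h d hd => h (d + c) (by rwa [coeff_add_mul_monomial, mul_one]), fun h d hd => ?_⟩
  rw [coeff_mul_monomial] at hd
  split_ifs at hd with hcd
  · simpa [tsub_add_cancel_of_le hcd] using h (d - c) (by simpa using hd)
  · exact absurd rfl hd

end Semiring

section CommSemiring

variable {σ R : Type*} [CommSemiring R]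

theorem mem_colon_span_monomial_one_image {S T : Set (σ →₀ ℕ)} (hS : S.Finite)
    {f : MvPowerSeries σ R} :
    f ∈ (Ideal.span ((monomial · (1 : R)) '' S)).colon
        (Ideal.span ((monomial · (1 : R)) '' T) : Set (MvPowerSeries σ R)) ↔
      ∀ d, coeff d f ≠ 0 → ∀ b ∈ T, ∃ a ∈ S, a ≤ d + b := by
  simp only [Ideal.colon_span, Submodule.mem_colon, Set.forall_mem_image, smul_eq_mul,
    mul_monomial_one_mem_span_monomial_one_image hS]
  exact ⟨fun h d hd b hb => h hb d hd, fun h b hb d hd => h d hd b hb⟩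

theorem map_iterateFrobenius_span_monomial_one_image (p : ℕ) [ExpChar (MvPowerSeries σ R) p]
    (e : ℕ) (S : Set (σ →₀ ℕ)) :
    (Ideal.span ((monomial · (1 : R)) '' S)).map (iterateFrobenius _ p e) =
      Ideal.span ((monomial · 1) '' ((p ^ e • ·) '' S)) := by
  simp only [Ideal.map_span, Set.image_image, iterateFrobenius_def, monomial_pow, one_pow]

end CommSemiring

end MvPowerSeries

theorem Ke_exponents_iff (q : ℕ) (d : Fin 3 →₀ ℕ) :
    (∀ b ∈ ({single 0 1 + single 1 1, single 1 1 + single 2 1} : Set (Fin 3 →₀ ℕ)),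
      ∃ a ∈ (q • ·) '' {single 0 1 + single 1 1, single 1 1 + single 2 1}, a ≤ d + b) ↔
    ∃ a ∈ ({single 0 q + single 1 (q - 1), single 0 (q - 1) + single 1 (q - 1) + single 2 (q - 1),
      single 1 (q - 1) + single 2 q} : Set (Fin 3 →₀ ℕ)), a ≤ d := by
  simp only [Set.forall_mem_insert, Set.mem_singleton_iff, forall_eq, Set.image_insert_eq,
    Set.image_singleton, Set.exists_mem_insert, exists_eq_left, smul_add, smul_single, smul_eq_mul,
    mul_one, Finsupp.le_def, Fin.forall_fin_succ, IsEmpty.forall_iff, coe_add, Pi.add_apply,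
    single_apply, Fin.succ_zero_eq_one, Fin.succ_one_eq_two, Fin.reduceEq, if_true, if_false,
    add_zero, zero_add, and_true]
  omega

theorem Ke_generators_general (K : Type*) [Field K] (p : ℕ) [Fact p.Prime] [CharP K p]
    (x y z : MvPowerSeries (Fin 3) K)
    (hx : x = X 0) (hy : y = X 1) (hz : z = X 2)
    (I : Ideal (MvPowerSeries (Fin 3) K)) (hI : I = Ideal.span {x * y, y * z})
    (e : ℕ) :
    (I.map (iterateFrobenius (MvPowerSeries (Fin 3) K) p e)).colon I =
      Ideal.span {x ^ p ^ e * y ^ (p ^ e - 1),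
        x ^ (p ^ e - 1) * y ^ (p ^ e - 1) * z ^ (p ^ e - 1),
        y ^ (p ^ e - 1) * z ^ p ^ e} := by
  have hI_monomial : I = Ideal.span ((monomial · 1) ''
      {single 0 1 + single 1 1, single 1 1 + single 2 1}) := by
    simp [hI, hx, hy, hz, Set.image_insert_eq, X_def, monomial_mul_monomial]
  have hK_monomial : Ideal.span {x ^ p ^ e * y ^ (p ^ e - 1),
        x ^ (p ^ e - 1) * y ^ (p ^ e - 1) * z ^ (p ^ e - 1),
        y ^ (p ^ e - 1) * z ^ p ^ e} = Ideal.span ((monomial · 1) ''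
      {single 0 (p ^ e) + single 1 (p ^ e - 1),
        single 0 (p ^ e - 1) + single 1 (p ^ e - 1) + single 2 (p ^ e - 1),
        single 1 (p ^ e - 1) + single 2 (p ^ e)}) := by
    simp [hx, hy, hz, Set.image_insert_eq, X_pow_eq, monomial_mul_monomial]
  ext f
  rw [hK_monomial, hI_monomial, map_iterateFrobenius_span_monomial_one_image,
    mem_colon_span_monomial_one_image (Set.toFinite _),
    mem_span_monomial_one_image (Set.toFinite _)]
  exact forall₂_congr fun d _ => Ke_exponents_iff (p ^ e) d

/-- For `I = (xy, yz)` in `R = K⟦x,y,z⟧` with `char K = p` prime and `e ≥ 1`,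
`K_e = (I^[p^e] : I)` is generated by `x^(p^e) y^(p^e-1)`, `x^(p^e-1) y^(p^e-1) z^(p^e-1)`
and `y^(p^e-1) z^(p^e)`. -/
theorem Ke_generators
    (K : Type*) [Field K] (p : ℕ) [Fact p.Prime] [CharP K p]
    (x y z : MvPowerSeries (Fin 3) K)
    (hx : x = X 0) (hy : y = X 1) (hz : z = X 2)
    (I : Ideal (MvPowerSeries (Fin 3) K)) (hI : I = Ideal.span {x * y, y * z})
    (e : ℕ) (he : 1 ≤ e) :
    (I.map (iterateFrobenius (MvPowerSeries (Fin 3) K) p e)).colon I =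
      Ideal.span {x ^ p ^ e * y ^ (p ^ e - 1),
        x ^ (p ^ e - 1) * y ^ (p ^ e - 1) * z ^ (p ^ e - 1),
        y ^ (p ^ e - 1) * z ^ p ^ e} :=
  Ke_generators_general K p x y z hx hy hz I hI e
end

section
/- Let $\mathbb{K}$ be a field of prime characteristic $p$, let $R = \mathbb{K}[\![x, y, z]\!]$ be the formal power series ring in three variables, let $I = (xy, yz)$, and for $c \geq 1$ write $K_c = (I^{[p^c]} : I)$. Let $e \geq 1$, let $s \geq 2$, and let $\beta_1, \dots, \beta_s$ be integers with $1 \leq \beta_i < e$ for all $i$ and $\beta_1 + \dots + \beta_s = e$. Then $x^{p^e} y^{p^e - 1}$ does not belong to the product of ideals $K_{\beta_1} \cdot K_{\beta_2}^{[p^{\beta_1}]} \cdot K_{\beta_3}^{[p^{\beta_1 + \beta_2}]} \cdots K_{\beta_s}^{[p^{\beta_1 + \dots + \beta_{s-1}}]}$. -/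
/-!
If `f ∈ K_c`, then `f * yz ∈ I^[p^c]`, so applying Frobenius `γ` times,
`f^(p^γ) * (yz)^(p^γ) ∈ I^[P] = (x^P y^P, y^P z^P)` with `P = p^(γ+c)`. Comparing coefficients,
every monomial of `f^(p^γ)` is divisible by `x^P` or by `z^(P - p^γ)`, hence by `x^P` or `z`
since `p^γ < P`. Thus the `i`-th factor of the product lies in the monomial ideal `(x^Pᵢ, z)`
with `Pᵢ = p^(β₁ + ⋯ + βᵢ)`, and the product lies in `(x^(∑ Pᵢ), z)`. As `s ≥ 2`, the sum
`∑ Pᵢ ≥ p^β₁ + p^e` exceeds `p^e`, so `x^(p^e) y^(p^e - 1)` is not in it.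
-/

open MvPowerSeries

namespace MvPowerSeries

variable {σ R : Type*} [CommSemiring R]

/-- For a lower set `S` this is the monomial ideal spanned (topologically) by the monomials
outside `S`; for instance `rectLowerSet i j a b` gives `(X i ^ a, X j ^ b)`. -/
def coeffVanishingIdeal (S : LowerSet (σ →₀ ℕ)) : Ideal (MvPowerSeries σ R) where
  carrier := {f | ∀ d ∈ S, coeff d f = 0}
  zero_mem' := by simp
  add_mem' hf hg d hd := by simp [hf d hd, hg d hd]
  smul_mem' r f hf d hd := by
    classical
    rw [smul_eq_mul, coeff_mul]
    refine Finset.sum_eq_zero fun uv huv => ?_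
    have hle : uv.2 ≤ d := by
      rw [← Finset.HasAntidiagonal.mem_antidiagonal.mp huv]
      exact le_add_self
    rw [hf uv.2 (S.lower hle hd), mul_zero]

theorem monomial_mem_coeffVanishingIdeal {S : LowerSet (σ →₀ ℕ)} {n : σ →₀ ℕ} (hn : n ∉ S)
    (r : R) : monomial n r ∈ coeffVanishingIdeal S := fun _ hd =>
  coeff_monomial_ne (ne_of_mem_of_not_mem hd hn) r

theorem mem_coeffVanishingIdeal_of_mul_monomial {S T : LowerSet (σ →₀ ℕ)} {n : σ →₀ ℕ}
    (hST : ∀ d ∈ T, d + n ∈ S) {f : MvPowerSeries σ R}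
    (hf : f * monomial n 1 ∈ coeffVanishingIdeal S) : f ∈ coeffVanishingIdeal T := fun d hd => by
  simpa only [coeff_add_mul_monomial, mul_one] using hf (d + n) (hST d hd)

theorem coeffVanishingIdeal_mul_le {S T U : LowerSet (σ →₀ ℕ)}
    (hsplit : ∀ u v, u + v ∈ U → u ∈ S ∨ v ∈ T) :
    coeffVanishingIdeal S * coeffVanishingIdeal T ≤
      (coeffVanishingIdeal U : Ideal (MvPowerSeries σ R)) := by
  classical
  refine Ideal.mul_le.mpr fun f hf g hg d hd => ?_
  rw [coeff_mul]
  refine Finset.sum_eq_zero fun uv huv => ?_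
  rw [← Finset.HasAntidiagonal.mem_antidiagonal.mp huv] at hd
  rcases hsplit uv.1 uv.2 hd with h | h
  · rw [hf _ h, zero_mul]
  · rw [hg _ h, mul_zero]

def rectLowerSet (i j : σ) (a b : ℕ) : LowerSet (σ →₀ ℕ) where
  carrier := {d | d i < a ∧ d j < b}
  lower' _ _ hle hd := ⟨(hle i).trans_lt hd.1, (hle j).trans_lt hd.2⟩

@[simp] theorem mem_rectLowerSet {i j : σ} {a b : ℕ} {d : σ →₀ ℕ} :
    d ∈ rectLowerSet i j a b ↔ d i < a ∧ d j < b :=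
  Iff.rfl

theorem coeffVanishingIdeal_rectLowerSet_mul_le (i j : σ) (a b : ℕ) :
    coeffVanishingIdeal (rectLowerSet i j a 1) * coeffVanishingIdeal (rectLowerSet i j b 1) ≤
      (coeffVanishingIdeal (rectLowerSet i j (a + b) 1) : Ideal (MvPowerSeries σ R)) :=
  coeffVanishingIdeal_mul_le fun u v huv => by
    simp only [mem_rectLowerSet, Finsupp.add_apply] at huv ⊢
    omega

theorem prod_le_coeffVanishingIdeal_rectLowerSet {ι : Type*} (t : Finset ι) (i j : σ)
    (A : ι → Ideal (MvPowerSeries σ R)) (N : ι → ℕ)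
    (hA : ∀ k ∈ t, A k ≤ coeffVanishingIdeal (rectLowerSet i j (N k) 1)) :
    ∏ k ∈ t, A k ≤ coeffVanishingIdeal (rectLowerSet i j (∑ k ∈ t, N k) 1) := by
  classical
  induction t using Finset.induction_on with
  | empty => exact fun _ _ _ hd => absurd hd.1 (Nat.not_lt_zero _)
  | insert k t hk ih =>
    rw [Finset.prod_insert hk, Finset.sum_insert hk]
    exact (Ideal.mul_mono (hA k (t.mem_insert_self k))
      (ih fun l hl => hA l (Finset.mem_insert_of_mem hl))).trans
      (coeffVanishingIdeal_rectLowerSet_mul_le i j _ _)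

theorem X_pow_mul_X_pow_eq_monomial (i j : σ) (a b : ℕ) :
    (X i ^ a * X j ^ b : MvPowerSeries σ R) =
      monomial (Finsupp.single i a + Finsupp.single j b) 1 := by
  rw [X_pow_eq, X_pow_eq, monomial_mul_monomial, one_mul]

end MvPowerSeries

section Frobenius

variable {Fld : Type*} [Field Fld] (p : ℕ) [Fact p.Prime] [CharP Fld p]

theorem iterateFrobenius_mem_of_mul_mem_map_span {c : ℕ} (hc : 1 ≤ c) (γ : ℕ)
    {f : MvPowerSeries (Fin 3) Fld}
    (hf : f * (X 1 * X 2) ∈ (Ideal.span {X 0 * X 1, X 1 * X 2}).map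
      (iterateFrobenius (MvPowerSeries (Fin 3) Fld) p c)) :
    iterateFrobenius _ p γ f ∈ coeffVanishingIdeal (rectLowerSet 0 2 (p ^ (γ + c)) 1) := by
  have hQP : p ^ γ < p ^ (γ + c) := Nat.pow_lt_pow_right (Fact.out : p.Prime).one_lt (by omega)
  have hspan : (Ideal.span {X 0 * X 1, X 1 * X 2}).map
      (iterateFrobenius (MvPowerSeries (Fin 3) Fld) p (γ + c)) ≤
      coeffVanishingIdeal (rectLowerSet 0 2 (p ^ (γ + c)) (p ^ (γ + c))) := by
    rw [Ideal.map_span, Set.image_pair, Ideal.span_le]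
    rintro g (rfl | rfl) <;>
    · rw [iterateFrobenius_def, mul_pow, X_pow_mul_X_pow_eq_monomial]
      exact monomial_mem_coeffVanishingIdeal (by simp) 1
  have hmul : iterateFrobenius _ p γ f *
      monomial (Finsupp.single 1 (p ^ γ) + Finsupp.single 2 (p ^ γ)) 1 ∈
      coeffVanishingIdeal (rectLowerSet 0 2 (p ^ (γ + c)) (p ^ (γ + c))) := by
    rw [← X_pow_mul_X_pow_eq_monomial, ← mul_pow, ← iterateFrobenius_def, ← map_mul]
    refine hspan ?_
    rw [iterateFrobenius_add, ← Ideal.map_map]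
    exact Ideal.mem_map_of_mem _ hf
  refine mem_coeffVanishingIdeal_of_mul_monomial (fun d hd => ?_) hmul
  simp only [mem_rectLowerSet, Finsupp.add_apply, Finsupp.single_apply, Fin.reduceEq, if_false,
    if_true] at hd ⊢
  omega

end Frobenius

theorem not_mem_prod_K_general
    (Fld : Type*) [Field Fld] (p : ℕ) [Fact p.Prime] [CharP Fld p]
    (x y z : MvPowerSeries (Fin 3) Fld)
    (hx : x = X 0) (hy : y = X 1) (hz : z = X 2)
    (I : Ideal (MvPowerSeries (Fin 3) Fld)) (hI : I = Ideal.span {x * y, y * z})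
    (K : ℕ → Ideal (MvPowerSeries (Fin 3) Fld))
    (hK : ∀ c, K c = (I.map (iterateFrobenius (MvPowerSeries (Fin 3) Fld) p c)).colon I)
    (e : ℕ)
    (s : ℕ) (hs : 2 ≤ s) (β : ℕ → ℕ) (hβ : ∀ i < s, 1 ≤ β i ∧ β i < e)
    (hsum : ∑ i ∈ Finset.range s, β i = e) :
    x ^ p ^ e * y ^ (p ^ e - 1) ∉
      ∏ i ∈ Finset.range s,
        (K (β i)).map (iterateFrobenius (MvPowerSeries (Fin 3) Fld) p
          (∑ j ∈ Finset.range i, β j)) := by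
  subst hx hy hz hI
  have hfactor : ∀ i ∈ Finset.range s,
      (K (β i)).map (iterateFrobenius (MvPowerSeries (Fin 3) Fld) p (∑ j ∈ Finset.range i, β j)) ≤
        coeffVanishingIdeal (rectLowerSet 0 2 (p ^ (∑ j ∈ Finset.range i, β j + β i)) 1) := by
    intro i hi
    rw [Ideal.map_le_iff_le_comap, hK]
    intro f hf
    exact iterateFrobenius_mem_of_mul_mem_map_span p (hβ i (Finset.mem_range.mp hi)).1 _
      (Submodule.mem_colon.mp hf _ (Ideal.subset_span (by simp)))
  have hexp_lt : p ^ e < ∑ i ∈ Finset.range s, p ^ (∑ j ∈ Finset.range i, β j + β i) := by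
    obtain ⟨t, rfl⟩ : ∃ t, s = t + 2 := ⟨s - 2, by omega⟩
    rw [Finset.sum_range_succ _ (t + 1), ← Finset.sum_range_succ β, hsum]
    have : 0 < ∑ i ∈ Finset.range (t + 1), p ^ (∑ j ∈ Finset.range i, β j + β i) :=
      Finset.sum_pos (fun _ _ => pow_pos (Fact.out : p.Prime).pos _) Finset.nonempty_range_add_one
    omega
  intro hmem
  have hcoeff := prod_le_coeffVanishingIdeal_rectLowerSet _ 0 2 _ _ hfactor hmem
    (Finsupp.single 0 (p ^ e) + Finsupp.single 1 (p ^ e - 1)) (by simpa using hexp_lt)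
  rw [X_pow_mul_X_pow_eq_monomial, coeff_monomial_same] at hcoeff
  exact one_ne_zero hcoeff

/-- In `R = K⟦x,y,z⟧` of prime characteristic `p`, with `I = (xy, yz)` and
`K c = (I^[p^c] : I)`, the monomial `x^(p^e) y^(p^e-1)` is not in the product
`K β₁ * (K β₂)^[p^β₁] * ⋯ * (K βₛ)^[p^(β₁+⋯+βₛ₋₁)]` whenever `s ≥ 2`,
`1 ≤ βᵢ < e` for all `i`, and `β₁ + ⋯ + βₛ = e`. -/
theorem not_mem_prod_K
    (Fld : Type*) [Field Fld] (p : ℕ) [Fact p.Prime] [CharP Fld p]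
    (x y z : MvPowerSeries (Fin 3) Fld)
    (hx : x = X 0) (hy : y = X 1) (hz : z = X 2)
    (I : Ideal (MvPowerSeries (Fin 3) Fld)) (hI : I = Ideal.span {x * y, y * z})
    (K : ℕ → Ideal (MvPowerSeries (Fin 3) Fld))
    (hK : ∀ c, K c = (I.map (iterateFrobenius (MvPowerSeries (Fin 3) Fld) p c)).colon I)
    (e : ℕ) (he : 1 ≤ e)
    (s : ℕ) (hs : 2 ≤ s) (β : ℕ → ℕ) (hβ : ∀ i < s, 1 ≤ β i ∧ β i < e)
    (hsum : ∑ i ∈ Finset.range s, β i = e) :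
    x ^ p ^ e * y ^ (p ^ e - 1) ∉
      ∏ i ∈ Finset.range s,
        (K (β i)).map (iterateFrobenius (MvPowerSeries (Fin 3) Fld) p
          (∑ j ∈ Finset.range i, β j)) :=
  not_mem_prod_K_general Fld p x y z hx hy hz I hI K hK e s hs β hβ hsum
end

section
/- Let $\mathbb{K}$ be a field of prime characteristic $p$, let $R = \mathbb{K}[\![x, y, z]\!]$ be the formal power series ring in three variables, let $I = (xy, yz)$, and for $c \geq 1$ write $K_c = (I^{[p^c]} : I)$. For $e \geq 1$ define $L_e = \sum K_{\beta_1} \cdot K_{\beta_2}^{[p^{\beta_1}]} \cdot K_{\beta_3}^{[p^{\beta_1+\beta_2}]} \cdots K_{\beta_s}^{[p^{\beta_1 + \dots + \beta_{s-1}}]}$, the sum ranging over all $s \geq 1$ and all tuples of integers $\beta_1, \dots, \beta_s$ with $1 \leq \beta_i < e$ for all $i$ and $\beta_1 + \dots + \beta_s = e$. Then for every $e \geq 1$, the element $x^{p^e} y^{p^e - 1}$ belongs to $K_e$ but not to $L_e$; in particular $K_e \not\subseteq L_e$. -/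
/-!
Give `x` and `z` weight one and `y` weight zero. Every element of `K c = (I^[p^c] : I)`, `c ≥ 1`,
has weighted order at least `p^c`: a monomial `x^a y^b z^d` of it must, after multiplication by
`xy` and by `yz`, be divisible by `x^(p^c) y^(p^c)` or `y^(p^c) z^(p^c)`, which forces
`a + d ≥ p^c` because `p^c ≥ 2`. Weighted orders add under products and multiply by `p^t` under the
`t`-th Frobenius. Since every `βᵢ < e`, a summand of `L e` has `s ≥ 2` factors and hence weighted
order at least `Σ_i p^(β₁ + ⋯ + βᵢ) ≥ p^e + 1`, while `x^(p^e) y^(p^e-1) ∈ K e` has weighted order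
exactly `p^e`.
-/

open MvPowerSeries Finsupp

namespace MvPowerSeries

section WeightedOrderIdeal

variable {σ : Type*} (R : Type*) [CommSemiring R] (w : σ → ℕ)

def weightedOrderIdeal (n : ℕ) : Ideal (MvPowerSeries σ R) where
  carrier := {f | (n : ℕ∞) ≤ f.weightedOrder w}
  zero_mem' := by simp
  add_mem' hf hg := le_trans (le_min hf hg) (min_weightedOrder_le_add w)
  smul_mem' r _ hf := le_trans (le_add_left hf) (le_weightedOrder_mul w)

variable {R w}

theorem mem_weightedOrderIdeal {n : ℕ} {f : MvPowerSeries σ R} :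
    f ∈ weightedOrderIdeal R w n ↔ (n : ℕ∞) ≤ f.weightedOrder w := Iff.rfl

theorem weightedOrderIdeal_anti {m n : ℕ} (h : m ≤ n) :
    weightedOrderIdeal R w n ≤ weightedOrderIdeal R w m :=
  fun _ hf => mem_weightedOrderIdeal.mpr ((Nat.cast_le.mpr h).trans hf)

theorem weightedOrderIdeal_zero : weightedOrderIdeal R w 0 = (⊤ : Ideal (MvPowerSeries σ R)) :=
  eq_top_iff.mpr fun f _ => by simp [mem_weightedOrderIdeal]

theorem mul_mem_weightedOrderIdeal {m n : ℕ} {f g : MvPowerSeries σ R}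
    (hf : f ∈ weightedOrderIdeal R w m) (hg : g ∈ weightedOrderIdeal R w n) :
    f * g ∈ weightedOrderIdeal R w (m + n) := by
  rw [mem_weightedOrderIdeal, Nat.cast_add]
  exact le_trans (add_le_add hf hg) (le_weightedOrder_mul w)

theorem pow_mem_weightedOrderIdeal {n : ℕ} {f : MvPowerSeries σ R}
    (hf : f ∈ weightedOrderIdeal R w n) (k : ℕ) :
    f ^ k ∈ weightedOrderIdeal R w (k * n) := by
  rw [mem_weightedOrderIdeal, Nat.cast_mul, ← nsmul_eq_mul]
  exact le_trans (nsmul_le_nsmul_right hf k) (le_weightedOrder_pow w k)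

theorem prod_le_weightedOrderIdeal {ι : Type*} {s : Finset ι}
    {J : ι → Ideal (MvPowerSeries σ R)} {n : ι → ℕ}
    (h : ∀ i ∈ s, J i ≤ weightedOrderIdeal R w (n i)) :
    ∏ i ∈ s, J i ≤ weightedOrderIdeal R w (∑ i ∈ s, n i) := by
  induction s using Finset.cons_induction with
  | empty => simp [weightedOrderIdeal_zero]
  | cons a s ha ih =>
    rw [Finset.prod_cons, Finset.sum_cons]
    refine Ideal.mul_le.mpr fun f hf g hg => mul_mem_weightedOrderIdeal
      (h a (Finset.mem_cons_self a s) hf) (ih (fun i hi => h i (Finset.mem_cons_of_mem hi)) hg)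

theorem map_iterateFrobenius_le_weightedOrderIdeal {p : ℕ} [ExpChar (MvPowerSeries σ R) p]
    {J : Ideal (MvPowerSeries σ R)} {n : ℕ} (hJ : J ≤ weightedOrderIdeal R w n) (t : ℕ) :
    J.map (iterateFrobenius (MvPowerSeries σ R) p t) ≤ weightedOrderIdeal R w (p ^ t * n) := by
  rw [Ideal.map_le_iff_le_comap]
  intro f hf
  rw [Ideal.mem_comap, iterateFrobenius_def]
  exact pow_mem_weightedOrderIdeal (hJ hf) _

theorem prod_map_iterateFrobenius_le_weightedOrderIdeal {p : ℕ} [ExpChar (MvPowerSeries σ R) p]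
    {K : ℕ → Ideal (MvPowerSeries σ R)} (hK : ∀ c, 1 ≤ c → K c ≤ weightedOrderIdeal R w (p ^ c))
    {s : ℕ} {β : ℕ → ℕ} (hβ : ∀ i < s, 1 ≤ β i) :
    ∏ i ∈ Finset.range s,
        (K (β i)).map (iterateFrobenius (MvPowerSeries σ R) p (∑ j ∈ Finset.range i, β j)) ≤
      weightedOrderIdeal R w (∑ i ∈ Finset.range s, p ^ ∑ j ∈ Finset.range (i + 1), β j) :=
  prod_le_weightedOrderIdeal fun i hi => by
    rw [Finset.sum_range_succ, pow_add]
    exact map_iterateFrobenius_le_weightedOrderIdeal (hK _ (hβ i (Finset.mem_range.mp hi))) _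

end WeightedOrderIdeal

variable {σ R : Type*} [CommSemiring R]

theorem le_or_le_of_mem_span_monomial_pair {d₁ d₂ m : σ →₀ ℕ} {f : MvPowerSeries σ R}
    (hf : f ∈ Ideal.span {monomial d₁ (1 : R), monomial d₂ 1}) (hm : coeff m f ≠ 0) :
    d₁ ≤ m ∨ d₂ ≤ m := by
  obtain ⟨a, b, rfl⟩ := Ideal.mem_span_pair.mp hf
  rw [map_add, coeff_mul_monomial, coeff_mul_monomial] at hm
  by_contra! h
  rw [if_neg h.1, if_neg h.2, add_zero] at hm
  exact hm rfl

theorem X_mul_X_pow (i j : σ) (q : ℕ) :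
    (X i * X j : MvPowerSeries σ R) ^ q = monomial (single i q + single j q) 1 := by
  rw [mul_pow, X_pow_eq, X_pow_eq, monomial_mul_monomial, one_mul]

end MvPowerSeries

theorem pow_sum_add_one_le_sum_pow_partial_sum {p s : ℕ} (hp : 0 < p) (hs : 2 ≤ s)
    (β : ℕ → ℕ) :
    p ^ (∑ j ∈ Finset.range s, β j) + 1 ≤
      ∑ i ∈ Finset.range s, p ^ ∑ j ∈ Finset.range (i + 1), β j := by
  obtain ⟨t, rfl⟩ : ∃ t, s = t + 1 + 1 := ⟨s - 2, by omega⟩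
  have hfirst : 1 ≤ ∑ i ∈ Finset.range (t + 1), p ^ ∑ j ∈ Finset.range (i + 1), β j :=
    Finset.sum_pos (fun _ _ => pow_pos hp _) Finset.nonempty_range_add_one
  rw [Finset.sum_range_succ (fun i => p ^ ∑ j ∈ Finset.range (i + 1), β j) (t + 1)]
  omega

theorem Ideal.map_iterateFrobenius_span_pair {S : Type*} [CommSemiring S] (p : ℕ) [ExpChar S p]
    (a b : S) (t : ℕ) :
    (Ideal.span {a, b}).map (iterateFrobenius S p t) = Ideal.span {a ^ p ^ t, b ^ p ^ t} := by
  rw [Ideal.map_span, Set.image_pair, iterateFrobenius_def, iterateFrobenius_def]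

theorem pow_mul_pow_pred_mem_colon {S : Type*} [CommSemiring S] (x y z : S) {q : ℕ}
    (hq : 1 ≤ q) :
    x ^ q * y ^ (q - 1) ∈
      (Ideal.span {(x * y) ^ q, (y * z) ^ q}).colon (Ideal.span {x * y, y * z} : Ideal S) := by
  obtain ⟨r, rfl⟩ : ∃ r, q = r + 1 := ⟨q - 1, by omega⟩
  rw [Submodule.mem_colon]
  intro v hv
  obtain ⟨a, b, rfl⟩ := Ideal.mem_span_pair.mp hv
  have key : x ^ (r + 1) * y ^ (r + 1 - 1) * (a * (x * y) + b * (y * z)) =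
      (a * x + b * z) * (x * y) ^ (r + 1) := by
    rw [Nat.add_sub_cancel]; ring
  rw [smul_eq_mul, key]
  exact Ideal.mul_mem_left _ _ (Ideal.subset_span (Set.mem_insert _ _))

def xzWeight : Fin 3 → ℕ := ![1, 0, 1]

theorem weight_xzWeight (m : Fin 3 →₀ ℕ) : weight xzWeight m = m 0 + m 2 := by
  simp [weight_apply, Finsupp.sum_fintype, Fin.sum_univ_three, xzWeight]

theorem mem_weightedOrderIdeal_of_mem_colon {R : Type*} [CommSemiring R] {q : ℕ} (hq : 2 ≤ q)
    {u : MvPowerSeries (Fin 3) R}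
    (hu : u ∈ (Ideal.span {(X 0 * X 1) ^ q, (X 1 * X 2) ^ q}).colon
      (Ideal.span {X 0 * X 1, X 1 * X 2} : Ideal (MvPowerSeries (Fin 3) R))) :
    u ∈ weightedOrderIdeal R xzWeight q := by
  refine nat_le_weightedOrder _ fun m hm => ?_
  by_contra hum
  have divides : ∀ {i j : Fin 3}, (X i * X j : MvPowerSeries (Fin 3) R) ∈
      Ideal.span {X 0 * X 1, X 1 * X 2} →
      single 0 q + single 1 q ≤ m + (single i 1 + single j 1) ∨
        single 1 q + single 2 q ≤ m + (single i 1 + single j 1) := by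
    intro i j hij
    refine le_or_le_of_mem_span_monomial_pair (f := u * monomial (single i 1 + single j 1) 1) ?_ ?_
    · have h := Submodule.mem_colon.mp hu _ hij
      rwa [X_mul_X_pow, X_mul_X_pow, smul_eq_mul, ← pow_one (X i * X j), X_mul_X_pow] at h
    · rwa [coeff_add_mul_monomial, mul_one]
  have hxy : q ≤ m 0 + 1 ∨ q ≤ m 2 :=
    (divides (Ideal.subset_span (Set.mem_insert _ _))).imp
      (fun h => by simpa using Finsupp.le_def.mp h 0) (fun h => by simpa using Finsupp.le_def.mp h 2)
  have hyz : q ≤ m 0 ∨ q ≤ m 2 + 1 :=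
    (divides (Ideal.subset_span (Set.mem_insert_of_mem _ rfl))).imp
      (fun h => by simpa using Finsupp.le_def.mp h 0) (fun h => by simpa using Finsupp.le_def.mp h 2)
  rw [weight_xzWeight] at hm
  omega

theorem weightedOrder_X_pow_mul_X_pow {R : Type*} [CommSemiring R] [Nontrivial R] (a b : ℕ) :
    (X 0 ^ a * X 1 ^ b : MvPowerSeries (Fin 3) R).weightedOrder xzWeight = a := by
  rw [X_pow_eq, X_pow_eq, monomial_mul_monomial, one_mul,
    weightedOrder_monomial_of_ne_zero _ one_ne_zero, weight_xzWeight]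
  simp

theorem Ke_not_le_Le_general
    (Fld : Type*) [Field Fld] (p : ℕ) [Fact p.Prime] [CharP Fld p]
    (x y z : MvPowerSeries (Fin 3) Fld)
    (hx : x = X 0) (hy : y = X 1) (hz : z = X 2)
    (I : Ideal (MvPowerSeries (Fin 3) Fld)) (hI : I = Ideal.span {x * y, y * z})
    (K : ℕ → Ideal (MvPowerSeries (Fin 3) Fld))
    (hK : ∀ c, K c = (I.map (iterateFrobenius (MvPowerSeries (Fin 3) Fld) p c)).colon I)
    (L : ℕ → Ideal (MvPowerSeries (Fin 3) Fld))
    (hL : ∀ e, L e =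
      ⨆ (s : ℕ) (_ : 1 ≤ s) (β : ℕ → ℕ)
        (_ : (∀ i < s, 1 ≤ β i ∧ β i < e) ∧ ∑ i ∈ Finset.range s, β i = e),
        ∏ i ∈ Finset.range s,
          (K (β i)).map (iterateFrobenius (MvPowerSeries (Fin 3) Fld) p
            (∑ j ∈ Finset.range i, β j)))
    (e : ℕ) :
    x ^ p ^ e * y ^ (p ^ e - 1) ∈ K e ∧
      x ^ p ^ e * y ^ (p ^ e - 1) ∉ L e ∧
      ¬ K e ≤ L e := by
  subst hx hy hz hI
  have hp : 2 ≤ p := (Fact.out : p.Prime).two_le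
  simp only [Ideal.map_iterateFrobenius_span_pair] at hK
  have hKW : ∀ c, 1 ≤ c → K c ≤ weightedOrderIdeal Fld xzWeight (p ^ c) := fun c hc u hu =>
    mem_weightedOrderIdeal_of_mem_colon (hp.trans (Nat.le_self_pow (by omega) p)) (hK c ▸ hu)
  have hmem : X 0 ^ p ^ e * X 1 ^ (p ^ e - 1) ∈ K e :=
    hK e ▸ pow_mul_pow_pred_mem_colon _ _ _ (Nat.one_le_pow _ _ (by omega))
  have hLW : L e ≤ weightedOrderIdeal Fld xzWeight (p ^ e + 1) := by
    rw [hL]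
    refine iSup_le fun s => iSup_le fun hs₁ => iSup_le fun β => iSup_le fun ⟨hβ, hsum⟩ => ?_
    have hs : 2 ≤ s := by
      by_contra! hs
      obtain rfl : s = 1 := by omega
      rw [Finset.sum_range_one] at hsum
      exact (hβ 0 one_pos).2.ne hsum
    refine (prod_map_iterateFrobenius_le_weightedOrderIdeal hKW fun i hi => (hβ i hi).1).trans
      (weightedOrderIdeal_anti ?_)
    exact hsum ▸ pow_sum_add_one_le_sum_pow_partial_sum (by omega) hs β
  have hnot : X 0 ^ p ^ e * X 1 ^ (p ^ e - 1) ∉ weightedOrderIdeal Fld xzWeight (p ^ e + 1) := by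
    rw [mem_weightedOrderIdeal, weightedOrder_X_pow_mul_X_pow, Nat.cast_le]
    omega
  exact ⟨hmem, fun h => hnot (hLW h), fun h => hnot (hLW (h hmem))⟩

/-- In `R = K⟦x,y,z⟧` of prime characteristic `p`, with `I = (xy, yz)`,
`K c = (I^[p^c] : I)` and
`L e = Σ K β₁ * (K β₂)^[p^β₁] * ⋯ * (K βₛ)^[p^(β₁+⋯+βₛ₋₁)]`, the sum ranging over all
`s ≥ 1` and all tuples `β₁, …, βₛ` with `1 ≤ βᵢ < e` and `β₁ + ⋯ + βₛ = e`, the monomial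
`x^(p^e) y^(p^e-1)` lies in `K e` but not in `L e`; in particular `¬ K e ≤ L e`. -/
theorem Ke_not_le_Le
    (Fld : Type*) [Field Fld] (p : ℕ) [Fact p.Prime] [CharP Fld p]
    (x y z : MvPowerSeries (Fin 3) Fld)
    (hx : x = X 0) (hy : y = X 1) (hz : z = X 2)
    (I : Ideal (MvPowerSeries (Fin 3) Fld)) (hI : I = Ideal.span {x * y, y * z})
    (K : ℕ → Ideal (MvPowerSeries (Fin 3) Fld))
    (hK : ∀ c, K c = (I.map (iterateFrobenius (MvPowerSeries (Fin 3) Fld) p c)).colon I)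
    (L : ℕ → Ideal (MvPowerSeries (Fin 3) Fld))
    (hL : ∀ e, L e =
      ⨆ (s : ℕ) (_ : 1 ≤ s) (β : ℕ → ℕ)
        (_ : (∀ i < s, 1 ≤ β i ∧ β i < e) ∧ ∑ i ∈ Finset.range s, β i = e),
        ∏ i ∈ Finset.range s,
          (K (β i)).map (iterateFrobenius (MvPowerSeries (Fin 3) Fld) p
            (∑ j ∈ Finset.range i, β j)))
    (e : ℕ) (he : 1 ≤ e) :
    x ^ p ^ e * y ^ (p ^ e - 1) ∈ K e ∧
      x ^ p ^ e * y ^ (p ^ e - 1) ∉ L e ∧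
      ¬ K e ≤ L e :=
  Ke_not_le_Le_general Fld p x y z hx hy hz I hI K hK L hL e
end
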